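/- In the quantum strategy for the n-party pseudo-telepathy game (players share |Φ_n^+⟩, each applies S^{x_j} then H, then measures in the computational basis), for any input x with ∑x_j ≡ 0 (mod 2), every measurement outcome y occurs with nonzero probability only if ∑y_j ≡ (1/2)∑x_j (mod 2); hence the quantum strategy wins with probability 1. -/

import Mathlib

noncomputable def phiPlus (n : ℕ) : (Fin n → Bool) → ℂ :=
  fun z => if z = (fun _ => false) ∨ z = (fun _ => true) then ((1 / Real.sqrt 2 : ℝ) : ℂ) else 0

def wt {n : ℕ} (y : Fin n → Bool) : ℕ :=
  (Finset.univ.filter (fun i => y i = true)).card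

noncomputable def Hn (n : ℕ) : Matrix (Fin n → Bool) (Fin n → Bool) ℂ :=
  fun y z =>
    ((1 / Real.sqrt 2 : ℝ) : ℂ) ^ n *
      (-1 : ℂ) ^ ((Finset.univ.filter (fun i => y i = true ∧ z i = true)).card)

/-- In the quantum strategy (share `|Φ_n^+⟩`, apply `S^{x_j}` then `H`, measure),
any outcome `y` with nonzero amplitude satisfies the winning condition; hence the
strategy wins with probability 1. -/
theorem quantum_strategy_wins (n : ℕ) (hn : 1 ≤ n) (x : Fin n → Bool) (hx : 2 ∣ wt x)
    (y : Fin n → Bool)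
    (hamp :
      (∑ z : Fin n → Bool,
          Hn n y z *
            Complex.I ^ ((Finset.univ.filter (fun i => x i = true ∧ z i = true)).card) *
            phiPlus n z) ≠ 0) :
    wt y % 2 = (wt x / 2) % 2 := by
  obtain ⟨k, hk⟩ := hx
  set c : ℂ := ((1 / Real.sqrt 2 : ℝ) : ℂ) with hc
  have hcpos : (0:ℝ) < 1 / Real.sqrt 2 := by positivity
  have hc0 : c ≠ 0 := by
    rw [hc]; exact_mod_cast Complex.ofReal_ne_zero.mpr hcpos.ne'
  set f : (Fin n → Bool) → ℂ := fun z =>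
      Hn n y z *
        Complex.I ^ ((Finset.univ.filter (fun i => x i = true ∧ z i = true)).card) *
        phiPlus n z with hf
  set z0 : Fin n → Bool := fun _ => false with hz0
  set z1 : Fin n → Bool := fun _ => true with hz1
  have hne : z0 ≠ z1 := by
    intro h
    have := congrFun h ⟨0, hn⟩
    simp [hz0, hz1] at this
  have hsum : (∑ z : Fin n → Bool, f z) = f z0 + f z1 := by
    rw [← Finset.sum_pair hne]
    refine (Finset.sum_subset (Finset.subset_univ _) ?_).symm
    intro z _ hz
    simp only [Finset.mem_insert, Finset.mem_singleton, not_or] at hz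
    simp [hf, phiPlus, hz.1, hz.2]
    rintro (h | h)
    exacts [absurd h hz.1, absurd h hz.2]
  have hf0 : f z0 = c ^ n * c := by
    simp [hf, Hn, phiPlus, hz0, hc]
  have hfy : (Finset.univ.filter (fun i => y i = true ∧ z1 i = true)).card = wt y := by
    simp [wt, hz1]
  have hfx : (Finset.univ.filter (fun i => x i = true ∧ z1 i = true)).card = wt x := by
    simp [wt, hz1]
  have hp1 : phiPlus n z1 = c := by simp [phiPlus, hz1, hc]
  have hf1 : f z1 = c ^ n * (-1 : ℂ) ^ wt y * Complex.I ^ wt x * c := by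
    simp only [hf, Hn, hp1, ← hc]
    simp [wt, hz1]
  have hI : Complex.I ^ wt x = (-1 : ℂ) ^ k := by
    rw [hk, pow_mul, Complex.I_sq]
  by_contra hcon
  apply hamp
  rw [hsum, hf0, hf1, hI]
  have hodd : (wt y + k) % 2 = 1 := by
    have hk2 : wt x / 2 = k := by omega
    omega
  have h2 : (-1 : ℂ) ^ wt y * (-1) ^ k = -1 := by
    rw [← pow_add]
    exact Odd.neg_one_pow (Nat.odd_iff.mpr hodd)
  linear_combination (c ^ n * c) * h2
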